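/- arXiv:0803.3601 — 2 statements merged into one kernel-verified Lean document; each statement's English description precedes it below -/
import Mathlib

section
/- Two representations of the quiver Σ of dimension vector (1,…,1) as above (loop scalar α₁, forward scalars α₂,…,α_m nonzero, backward scalars 1) with parameter tuples (α₁,…,α_m) and (α₁',…,α_m') are isomorphic if and only if α₁ = α₁' and α_j = α_j' for all j. -/
/-- Two `(1,…,1)`-dimensional representations of the quiver `Σ` (loop scalar
`α 0` at `v₁`, forward scalars `α i.succ ≠ 0`, backward scalars `1`) with
parameter tuples `α` and `α'` are isomorphic (via nonzero intertwining scalars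
`c i` at the vertices) if and only if `α = α'`.  Hence the parameters give an
`m`-parameter family of pairwise non-isomorphic simple representations. -/
theorem stmt13 (k : ℕ) (α α' : Fin (k + 1) → ℂ)
    (hα : ∀ i : Fin k, α i.succ ≠ 0) (hα' : ∀ i : Fin k, α' i.succ ≠ 0) :
    (∃ c : Fin (k + 1) → ℂ, (∀ i, c i ≠ 0) ∧
        c 0 * α 0 = α' 0 * c 0 ∧
        (∀ i : Fin k, c i.succ * α i.succ = α' i.succ * c i.castSucc) ∧
        (∀ i : Fin k, c i.castSucc * 1 = 1 * c i.succ)) ↔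
      ∀ i, α i = α' i := by
  constructor
  · rintro ⟨c, hc, h0, hf, hb⟩ i
    induction i using Fin.cases with
    | zero =>
      have h1 : c 0 * α 0 = c 0 * α' 0 := by rw [h0, mul_comm]
      exact mul_left_cancel₀ (hc 0) h1
    | succ j =>
      have hcc : c j.castSucc = c j.succ := by simpa using hb j
      have := hf j
      rw [hcc] at this
      have h1 : c j.succ * α j.succ = c j.succ * α' j.succ := by rw [this, mul_comm]
      exact mul_left_cancel₀ (hc j.succ) h1
  · intro h
    refine ⟨fun _ => 1, fun _ => one_ne_zero, by rw [h 0]; ring, fun i => by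
      rw [h i.succ]; ring, fun i => by ring⟩
end

section
/- For λ ∈ ℂ*, let T(λ) be the 2-dimensional representation of C₂ * C₃ with u ↦ [[0,λ],[λ⁻¹,0]] and v ↦ diag(1, ω) where ω is a primitive cube root of unity. Then T(λ) is well-defined (u² = I, v³ = I) and irreducible. -/
/-- The relations of `C₂ * C₃ = ⟨u, v | u² = v³ = e⟩`. -/
def C23Rels : Set (FreeGroup (Fin 2)) :=
  {FreeGroup.of 0 ^ 2, FreeGroup.of 1 ^ 3}

/-- The free product `C₂ * C₃` as a presented group. -/
abbrev C2C3 : Type := PresentedGroup C23Rels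

/-- The generator `u` (of order 2) of `C₂ * C₃`. -/
def genU : C2C3 := PresentedGroup.of 0

/-- The generator `v` (of order 3) of `C₂ * C₃`. -/
def genV : C2C3 := PresentedGroup.of 1

open Matrix

/-!
The matrix `diag(1, ω)` has the two distinct eigenvalues `1` and `ω`, so an invariant subspace
containing a vector with nonzero `i`-th coordinate contains the `i`-th basis vector `eᵢ`
(apply `diag(1, ω) - c` for the other eigenvalue `c`). The antidiagonal matrix swaps `e₀` and `e₁`
up to the nonzero scalars `λ`, `λ⁻¹`, so a nonzero invariant subspace contains both.
-/

section

variable {R : Type*} [Semiring R]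

theorem diag_fin_two_pow (a b : R) (n : ℕ) :
    (!![a, 0; 0, b] : Matrix (Fin 2) (Fin 2) R) ^ n = !![a ^ n, 0; 0, b ^ n] := by
  rw [← diagonal_vec2, diagonal_pow, ← diagonal_vec2]
  congr 1
  ext i
  fin_cases i <;> rfl

theorem Submodule.eq_top_of_forall_single_mem {ι : Type*} [Finite ι] [DecidableEq ι]
    {W : Submodule R (ι → R)} (h : ∀ i, Pi.single i 1 ∈ W) : W = ⊤ := by
  rw [eq_top_iff, ← (Pi.basisFun R ι).span_eq, Submodule.span_le]
  rintro _ ⟨i, rfl⟩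
  simpa using h i

end

section

variable {K : Type*} [Field K]

theorem antidiag_inv_sq {l : K} (hl : l ≠ 0) :
    (!![0, l; l⁻¹, 0] : Matrix (Fin 2) (Fin 2) K) ^ 2 = 1 := by
  rw [sq, mul_fin_two, one_fin_two]
  simp [hl]

theorem single_mem_of_diag_invariant {a b : K} (hab : a ≠ b) {W : Submodule K (Fin 2 → K)}
    (hW : ∀ x ∈ W, !![a, 0; 0, b] *ᵥ x ∈ W) {x : Fin 2 → K} (hx : x ∈ W) {i : Fin 2}
    (hxi : x i ≠ 0) : Pi.single i 1 ∈ W := by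
  set c := ![b, a] i
  have hkill : !![a, 0; 0, b] *ᵥ x - c • x = ((![a, b] i - c) * x i) • Pi.single i 1 := by
    fin_cases i <;> ext j <;> fin_cases j <;> simp [c, vecHead, vecTail] <;> ring
  have hgap : ![a, b] i - c ≠ 0 := by
    fin_cases i
    exacts [sub_ne_zero.2 hab, sub_ne_zero.2 hab.symm]
  have hmem := W.smul_mem ((![a, b] i - c) * x i)⁻¹ (W.sub_mem (hW x hx) (W.smul_mem c hx))
  rwa [hkill, smul_smul, inv_mul_cancel₀ (mul_ne_zero hgap hxi), one_smul] at hmem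

theorem single_mem_of_antidiag_invariant {l : K} (hl : l ≠ 0) {W : Submodule K (Fin 2 → K)}
    (hW : ∀ x ∈ W, !![0, l; l⁻¹, 0] *ᵥ x ∈ W) {i : Fin 2} (hi : Pi.single i 1 ∈ W)
    (j : Fin 2) : Pi.single j 1 ∈ W := by
  have hswap := W.smul_mem (![l, l⁻¹] i) (hW _ hi)
  fin_cases i <;> fin_cases j
  · exact hi
  · convert hswap using 1; ext k; fin_cases k <;> simp [hl]
  · convert hswap using 1; ext k; fin_cases k <;> simp [hl]
  · exact hi

theorem eq_bot_or_eq_top_of_antidiag_diag_invariant {l a b : K} (hl : l ≠ 0) (hab : a ≠ b)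
    (W : Submodule K (Fin 2 → K)) (hU : ∀ x ∈ W, !![0, l; l⁻¹, 0] *ᵥ x ∈ W)
    (hV : ∀ x ∈ W, !![a, 0; 0, b] *ᵥ x ∈ W) : W = ⊥ ∨ W = ⊤ := by
  refine or_iff_not_imp_left.2 fun hW => ?_
  obtain ⟨x, hx, hx0⟩ := W.exists_mem_ne_zero_of_ne_bot hW
  obtain ⟨i, hi⟩ := Function.ne_iff.1 hx0
  exact Submodule.eq_top_of_forall_single_mem
    (single_mem_of_antidiag_invariant hl hU (single_mem_of_diag_invariant hab hV hx hi))

end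

/-- For `λ ∈ ℂ*`, the assignment `u ↦ [[0,λ],[λ⁻¹,0]]`, `v ↦ diag(1,ω)` (`ω` a
primitive cube root of unity) gives a well-defined (`u² = 1`, `v³ = 1`)
irreducible 2-dimensional representation `T(λ)` of `C₂ * C₃`. -/
theorem stmt15 (l : ℂ) (hl : l ≠ 0) (ω : ℂ) (hω : IsPrimitiveRoot ω 3) :
    (!![0, l; l⁻¹, 0] : Matrix (Fin 2) (Fin 2) ℂ) ^ 2 = 1 ∧
    (!![1, 0; 0, ω] : Matrix (Fin 2) (Fin 2) ℂ) ^ 3 = 1 ∧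
    ∀ W : Submodule ℂ (Fin 2 → ℂ),
      (∀ x ∈ W, (!![0, l; l⁻¹, 0] : Matrix (Fin 2) (Fin 2) ℂ).mulVec x ∈ W) →
      (∀ x ∈ W, (!![1, 0; 0, ω] : Matrix (Fin 2) (Fin 2) ℂ).mulVec x ∈ W) →
      W = ⊥ ∨ W = ⊤ := by
  refine ⟨antidiag_inv_sq hl, ?_, fun W hU hV => ?_⟩
  · rw [diag_fin_two_pow, one_pow, hω.pow_eq_one, one_fin_two]
  · exact eq_bot_or_eq_top_of_antidiag_diag_invariant hl (hω.ne_one (by norm_num)).symm W hU hV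
end
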